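/- The map Φ: O_n → ℝ^n sending O to the diagonal of O D_λ O^t is continuous, and the pushforward of the Haar probability measure on O_n under Φ is a probability measure supported on the permutahedron PH_λ, invariant under the action of S_n permuting coordinates. -/

import Mathlib

/-!
Write `Φ(O) = diag(O D_λ Oᵀ)`. Entrywise `Φ(O) = (O ⊙ O) λ`, and for orthogonal `O` the
Hadamard square `O ⊙ O` is doubly stochastic, so by Birkhoff's theorem it is a convex
combination of permutation matrices and `Φ(O)` lies in the convex hull of the permutations
of `λ`. Left multiplication by a permutation matrix `P_σ` conjugates `O D_λ Oᵀ` by `P_σ`, which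
permutes its diagonal, so `Φ(P_σ O) = Φ(O) ∘ σ`; invariance of the pushforward follows from
the left invariance of the Haar measure.
-/

open Matrix Finset MeasureTheory

noncomputable instance (n m : ℕ) : MeasurableSpace (Matrix (Fin n) (Fin m) ℝ) := by
  exact MeasurableSpace.pi

instance (n m : ℕ) : BorelSpace (Matrix (Fin n) (Fin m) ℝ) := Pi.borelSpace

namespace Matrix

section Perm

variable {n R : Type*} [Fintype n] [DecidableEq n]

theorem permMatrix_mem_orthogonalGroup [CommRing R] (σ : Equiv.Perm n) :
    σ.permMatrix R ∈ orthogonalGroup n R := by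
  rw [mem_orthogonalGroup_iff, transpose_permMatrix, ← permMatrix_mul, inv_mul_cancel,
    permMatrix_one]

theorem diag_permMatrix_mul_mul_transpose [NonAssocSemiring R] (σ : Equiv.Perm n)
    (A : Matrix n n R) :
    (σ.permMatrix R * A * (σ.permMatrix R)ᵀ).diag = A.diag ∘ σ := by
  rw [transpose_permMatrix, Equiv.Perm.permMatrix, Equiv.Perm.permMatrix,
    PEquiv.toMatrix_toPEquiv_mul, PEquiv.mul_toMatrix_toPEquiv]
  rfl

theorem diag_permMatrix_mul_mul_mul_transpose [CommSemiring R] (σ : Equiv.Perm n)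
    (A B : Matrix n n R) :
    (σ.permMatrix R * A * B * (σ.permMatrix R * A)ᵀ).diag = (A * B * Aᵀ).diag ∘ σ := by
  rw [← diag_permMatrix_mul_mul_transpose, transpose_mul]
  simp only [Matrix.mul_assoc]

end Perm

theorem diag_mul_diagonal_mul_transpose {m n R : Type*} [Fintype n] [DecidableEq n]
    [CommSemiring R] (O : Matrix m n R) (d : n → R) :
    (O * diagonal d * Oᵀ).diag = (O ⊙ O) *ᵥ d := by
  ext i
  rw [diag_apply, mul_apply]
  simp only [mul_diagonal, transpose_apply, mulVec, dotProduct, hadamard_apply]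
  exact Finset.sum_congr rfl fun j _ => by ring

theorem hadamard_self_mem_doublyStochastic {n : Type*} [Fintype n] [DecidableEq n]
    {O : Matrix n n ℝ} (hO : O ∈ orthogonalGroup n ℝ) :
    O ⊙ O ∈ doublyStochastic ℝ n := by
  have hrow := (mem_orthogonalGroup_iff n ℝ).1 hO
  have hcol := (mem_orthogonalGroup_iff' n ℝ).1 hO
  refine mem_doublyStochastic_iff_sum.2 ⟨fun i j => mul_self_nonneg _, fun i => ?_, fun j => ?_⟩
  · simpa [mul_apply] using congrFun (congrFun hrow i) i
  · simpa [mul_apply] using congrFun (congrFun hcol j) j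

end Matrix

theorem mulVec_mem_convexHull_of_mem_doublyStochastic {R n : Type*} [Field R] [LinearOrder R]
    [IsStrictOrderedRing R] [Fintype n] [DecidableEq n] {M : Matrix n n R}
    (hM : M ∈ doublyStochastic R n) (x : n → R) :
    M *ᵥ x ∈ convexHull R (Set.range fun σ : Equiv.Perm n => x ∘ σ) := by
  let evalAt : Matrix n n R →ₗ[R] n → R := (mulVecBilin R R).flip x
  have hM' : M ∈ convexHull R {σ.permMatrix R | σ : Equiv.Perm n} := by
    rwa [← doublyStochastic_eq_convexHull_permMatrix]
  have himage := Set.mem_image_of_mem evalAt hM'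
  rw [evalAt.image_convexHull] at himage
  refine convexHull_mono ?_ himage
  rintro _ ⟨_, ⟨σ, rfl⟩, rfl⟩
  exact ⟨σ, (permMatrix_mulVec (σ := σ)).symm⟩

/-- The easy half of the Schur–Horn theorem. -/
theorem diag_mul_diagonal_mul_transpose_mem_convexHull {n : Type*} [Fintype n] [DecidableEq n]
    {O : Matrix n n ℝ} (hO : O ∈ orthogonalGroup n ℝ) (d : n → ℝ) :
    (O * diagonal d * Oᵀ).diag ∈ convexHull ℝ (Set.range fun σ : Equiv.Perm n => d ∘ σ) := by
  rw [diag_mul_diagonal_mul_transpose]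
  exact mulVec_mem_convexHull_of_mem_doublyStochastic (hadamard_self_mem_doublyStochastic hO) d

/-- The map `Φ : O ↦ diag(O D_λ Oᵀ)` is continuous; the pushforward of the Haar
probability measure of `O_n` under `Φ` is a probability measure, supported on
the permutahedron `PH_λ` (the convex hull of the `S_n`-orbit of `λ`), and
invariant under the `S_n`-action permuting coordinates. -/
theorem pushforward_diag_measure (n : ℕ) (lam : Fin n → ℝ)
    (μ : Measure (Matrix (Fin n) (Fin n) ℝ)) [IsProbabilityMeasure μ]
    (hsupp : μ {O | O ∉ Matrix.orthogonalGroup (Fin n) ℝ} = 0)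
    (hinv : ∀ P ∈ Matrix.orthogonalGroup (Fin n) ℝ,
      μ.map (fun O => P * O) = μ) :
    Continuous (fun O : Matrix (Fin n) (Fin n) ℝ =>
      (fun i => (O * Matrix.diagonal lam * Oᵀ) i i)) ∧
    IsProbabilityMeasure
      (μ.map (fun O : Matrix (Fin n) (Fin n) ℝ =>
        (fun i => (O * Matrix.diagonal lam * Oᵀ) i i))) ∧
    (μ.map (fun O : Matrix (Fin n) (Fin n) ℝ =>
        (fun i => (O * Matrix.diagonal lam * Oᵀ) i i)))
      {x : Fin n → ℝ | x ∉ convexHull ℝ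
        {y : Fin n → ℝ | ∃ σ : Equiv.Perm (Fin n), y = lam ∘ σ}} = 0 ∧
    ∀ σ : Equiv.Perm (Fin n),
      (μ.map (fun O : Matrix (Fin n) (Fin n) ℝ =>
          (fun i => (O * Matrix.diagonal lam * Oᵀ) i i))).map
        (fun x : Fin n → ℝ => x ∘ σ) =
      μ.map (fun O : Matrix (Fin n) (Fin n) ℝ =>
        (fun i => (O * Matrix.diagonal lam * Oᵀ) i i)) := by
  set Φ : Matrix (Fin n) (Fin n) ℝ → Fin n → ℝ := fun O i => (O * diagonal lam * Oᵀ) i i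
  have hΦ : Continuous Φ := by
    change Continuous fun O : Matrix (Fin n) (Fin n) ℝ => (O * diagonal lam * Oᵀ).diag
    fun_prop
  have hPH : {y : Fin n → ℝ | ∃ σ : Equiv.Perm (Fin n), y = lam ∘ σ} =
      Set.range fun σ : Equiv.Perm (Fin n) => lam ∘ σ := by
    ext y
    simp only [Set.mem_ofPred_eq, Set.mem_range, eq_comm]
  refine ⟨hΦ, Measure.isProbabilityMeasure_map hΦ.aemeasurable, ?_, fun σ => ?_⟩
  · have hclosed : IsClosed (convexHull ℝ (Set.range fun σ : Equiv.Perm (Fin n) => lam ∘ σ)) :=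
      ((Set.finite_range _).isCompact_convexHull ℝ).isClosed
    rw [hPH]
    refine ae_iff.1 ((ae_map_iff hΦ.aemeasurable hclosed.measurableSet).2 ?_)
    filter_upwards [ae_iff.2 hsupp] with O hO
    exact diag_mul_diagonal_mul_transpose_mem_convexHull hO lam
  · have hsemiconj : Function.Semiconj Φ (σ.permMatrix ℝ * ·) (· ∘ σ) := fun O =>
      diag_permMatrix_mul_mul_mul_transpose σ O (diagonal lam)
    have hleft : MeasurePreserving (σ.permMatrix ℝ * ·) μ μ :=
      ⟨(continuous_const.matrix_mul continuous_id).measurable, hinv _ (permMatrix_mem_orthogonalGroup σ)⟩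
    exact (hΦ.measurable.measurePreserving μ).of_semiconj hleft hsemiconj
      (measurable_pi_lambda _ fun i => measurable_pi_apply (σ i)) |>.map_eq
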